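/- arXiv:math/9801122 — 2 statements merged into one kernel-verified Lean document; each statement's English description precedes it below -/
import Mathlib

section
/- Let n ≥ 3 be an integer, let δ be one of the resonant values 2/n, (n+2)/(2n), 1, (n+1)/n, (n+2)/n, and let (λ, μ) with μ = λ + δ be one of the pairs for which the system is solvable (namely: ((n−2)/(2n),(n+2)/(2n)) for δ=2/n; (0,(n+2)/(2n)) or ((n−2)/(2n),1) for δ=(n+2)/(2n); (0,1) for δ=1; (0,(n+1)/n) or (−1/n,1) for δ=(n+1)/n; (−1/n,(n+1)/n) for δ=(n+2)/n). Then the set of solutions (γ₁,…,γ₅) ∈ ℝ⁵ of the linear system (2−nδ)γ₁−(γ₂+γ₃)=−1/2; (n(1−2δ)+2)γ₄−γ₅=nλγ₁; 2(n(1−δ)+1)γ₅=nλ(γ₂+γ₃); (1−δ)γ₂=λ; (2+n(1−δ))(γ₂+γ₃)=nλ+1 is a one-dimensional affine subspace of ℝ⁵ (a one-parameter family). -/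
/-- The linear system (from the equivariance equation) characterizing the
coefficients `(γ₁,…,γ₅)` of the conformally equivariant quantization map on
second-order symbols, stated for `γ : Fin 5 → ℝ`. -/
def quantSystem (n : ℕ) (lam dlt : ℝ) (g : Fin 5 → ℝ) : Prop :=
  (2 - (n : ℝ) * dlt) * g 0 - (g 1 + g 2) = -(1 / 2) ∧
  ((n : ℝ) * (1 - 2 * dlt) + 2) * g 3 - g 4 = (n : ℝ) * lam * g 0 ∧
  2 * ((n : ℝ) * (1 - dlt) + 1) * g 4 = (n : ℝ) * lam * (g 1 + g 2) ∧
  (1 - dlt) * g 1 = lam ∧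
  (2 + (n : ℝ) * (1 - dlt)) * (g 1 + g 2) = (n : ℝ) * lam + 1

lemma cancel_fac {a x y : ℝ} (ha : a ≠ 0) (h : a * (x - y) = 0) : x = y := by
  rcases mul_eq_zero.mp h with h | h
  · exact absurd h ha
  · linarith

set_option maxHeartbeats 1000000 in
/-- in the solvable resonant cases, the set of solutions of the
system is a one-dimensional affine subspace (a one-parameter family) in `ℝ⁵`. -/
theorem quantSystem_resonant_solution_set_one_dimensional (n : ℕ) (hn : 3 ≤ n)
    (lam mu dlt : ℝ) (hmu : mu = lam + dlt)
    (hcase :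
      (dlt = 2 / (n : ℝ) ∧
          lam = ((n : ℝ) - 2) / (2 * (n : ℝ)) ∧ mu = ((n : ℝ) + 2) / (2 * (n : ℝ))) ∨
      (dlt = ((n : ℝ) + 2) / (2 * (n : ℝ)) ∧
          ((lam = 0 ∧ mu = ((n : ℝ) + 2) / (2 * (n : ℝ))) ∨
           (lam = ((n : ℝ) - 2) / (2 * (n : ℝ)) ∧ mu = 1))) ∨
      (dlt = 1 ∧ lam = 0 ∧ mu = 1) ∨
      (dlt = ((n : ℝ) + 1) / (n : ℝ) ∧
          ((lam = 0 ∧ mu = ((n : ℝ) + 1) / (n : ℝ)) ∨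
           (lam = -(1 / (n : ℝ)) ∧ mu = 1))) ∨
      (dlt = ((n : ℝ) + 2) / (n : ℝ) ∧
          lam = -(1 / (n : ℝ)) ∧ mu = ((n : ℝ) + 1) / (n : ℝ))) :
    ∃ g₀ v : Fin 5 → ℝ, v ≠ 0 ∧
      {g : Fin 5 → ℝ | quantSystem n lam dlt g} = {g | ∃ t : ℝ, g = g₀ + t • v} := by
  have hn3 : (3:ℝ) ≤ (n:ℝ) := by exact_mod_cast hn
  have hn0 : (n:ℝ) ≠ 0 := by intro h; rw [h] at hn3; norm_num at hn3
  have hm2 : (n:ℝ) - 2 ≠ 0 := by intro h; nlinarith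
  have hm1 : (n:ℝ) - 1 ≠ 0 := by intro h; nlinarith
  have hp2 : (n:ℝ) + 2 ≠ 0 := by intro h; nlinarith
  rcases hcase with ⟨hd, hl, _⟩ | ⟨hd, ⟨hl, _⟩ | ⟨hl, _⟩⟩ | ⟨hd, hl, _⟩ |
      ⟨hd, ⟨hl, _⟩ | ⟨hl, _⟩⟩ | ⟨hd, hl, _⟩ <;> subst hd hl
  -- branch 1 : dlt = 2/n, lam = (n-2)/(2n)
  · refine ⟨![0, 1/2, 0, 1/(8*((n:ℝ)-1)), ((n:ℝ)-2)/(8*((n:ℝ)-1))], ![1,0,0,1/2,0], ?_, ?_⟩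
    · intro h; have := congrFun h 0; norm_num at this
    · ext g
      simp only [Set.mem_setOf_eq, quantSystem]
      constructor
      · rintro ⟨h1, h2', h3, h4', h5⟩
        field_simp at h1 h2' h3 h4' h5
        have e1 : g 1 = 1/2 :=
          cancel_fac (mul_ne_zero hm2 (mul_ne_zero two_ne_zero hn0))
            (by linear_combination ((n:ℝ)-2)*(n:ℝ)*h4')
        have e2 : g 2 = 0 := by linarith
        have e4 : 8*((n:ℝ)-1)*g 4 = (n:ℝ)-2 :=
          cancel_fac hn0 (by linear_combination 2*(n:ℝ)*h3 - (n:ℝ)*((n:ℝ)-2)*h1)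
        have e3 : 8*((n:ℝ)-1)*g 3 = 4*((n:ℝ)-1)*g 0 + 1 :=
          cancel_fac (mul_ne_zero hn0 hm2)
            (by linear_combination 4*(n:ℝ)*((n:ℝ)-1)*h2' + (n:ℝ)*e4)
        refine ⟨g 0, ?_⟩
        funext j; fin_cases j <;> simp <;> (try field_simp) <;> linarith
      · rintro ⟨t, rfl⟩
        refine ⟨?_,?_,?_,?_,?_⟩ <;>
          simp only [Pi.add_apply, Pi.smul_apply, smul_eq_mul, Matrix.cons_val_zero,
            Matrix.cons_val_one, Matrix.head_cons, Matrix.cons_val_two, Matrix.tail_cons,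
            Matrix.cons_val_three, Matrix.cons_val_four] <;>
          field_simp <;> (first | ring1 | tauto | (left; ring1) | (right; ring1))
  -- branch 2a : dlt = (n+2)/(2n), lam = 0
  · refine ⟨![1/((n:ℝ)+2), 0, 2/((n:ℝ)+2), 0, 0], ![0,0,0,1,0], ?_, ?_⟩
    · intro h; have := congrFun h 3; change (1:ℝ) = 0 at this; norm_num at this
    · ext g
      simp only [Set.mem_setOf_eq, quantSystem]
      constructor
      · rintro ⟨h1, h2', h3, h4', h5⟩
        field_simp at h1 h2' h3 h4' h5
        have e1 : g 1 = 0 := cancel_fac hm2 (by linear_combination h4')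
        have e4 : g 4 = 0 := cancel_fac hn0 (by linear_combination (-(n:ℝ))*h2')
        have e12 : ((n:ℝ)+2)*(g 1 + g 2) = 2 := cancel_fac hn0 (by linear_combination (n:ℝ)*h5)
        have e2 : ((n:ℝ)+2)*g 2 = 2 := by linear_combination e12 - ((n:ℝ)+2)*e1
        have e0 : ((n:ℝ)+2)*g 0 = 1 :=
          cancel_fac (mul_ne_zero (mul_ne_zero two_ne_zero hn0) hm2)
            (by linear_combination (-2*(n:ℝ)*((n:ℝ)+2))*h1 + (-4*(n:ℝ))*e12)
        refine ⟨g 3, ?_⟩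
        funext j; fin_cases j <;> simp <;> (try field_simp) <;> linarith
      · rintro ⟨t, rfl⟩
        refine ⟨?_,?_,?_,?_,?_⟩ <;>
          simp only [Pi.add_apply, Pi.smul_apply, smul_eq_mul, Matrix.cons_val_zero,
            Matrix.cons_val_one, Matrix.head_cons, Matrix.cons_val_two, Matrix.tail_cons,
            Matrix.cons_val_three, Matrix.cons_val_four] <;>
          field_simp <;> (first | ring1 | tauto | (left; ring1) | (right; ring1))
  -- branch 2b : dlt = (n+2)/(2n), lam = (n-2)/(2n)
  · refine ⟨![-(1/((n:ℝ)+2)), 1, -(2/((n:ℝ)+2)), 0, ((n:ℝ)-2)/(2*((n:ℝ)+2))],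
        ![0,0,0,1,0], ?_, ?_⟩
    · intro h; have := congrFun h 3; change (1:ℝ) = 0 at this; norm_num at this
    · ext g
      simp only [Set.mem_setOf_eq, quantSystem]
      constructor
      · rintro ⟨h1, h2', h3, h4', h5⟩
        field_simp at h1 h2' h3 h4' h5
        have e1 : g 1 = 1 := cancel_fac hm2 (by linear_combination h4')
        have e12 : ((n:ℝ)+2)*(g 1 + g 2) = (n:ℝ) := cancel_fac hn0 (by linear_combination (n:ℝ)*h5)
        have e2 : ((n:ℝ)+2)*g 2 = -2 := by linear_combination e12 - ((n:ℝ)+2)*e1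
        have e0 : ((n:ℝ)+2)*g 0 = -1 :=
          cancel_fac (mul_ne_zero (mul_ne_zero two_ne_zero hn0) hm2)
            (by linear_combination (-2*(n:ℝ)*((n:ℝ)+2))*h1 + (-4*(n:ℝ))*e12)
        have e4 : 2*((n:ℝ)+2)*g 4 = (n:ℝ)-2 :=
          cancel_fac (mul_ne_zero hn0 hn0)
            (by linear_combination (n:ℝ)*((n:ℝ)+2)*h3 + (n:ℝ)*((n:ℝ)-2)*e12)
        refine ⟨g 3, ?_⟩
        funext j; fin_cases j <;> simp <;> (try field_simp) <;> linarith
      · rintro ⟨t, rfl⟩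
        refine ⟨?_,?_,?_,?_,?_⟩ <;>
          simp only [Pi.add_apply, Pi.smul_apply, smul_eq_mul, Matrix.cons_val_zero,
            Matrix.cons_val_one, Matrix.head_cons, Matrix.cons_val_two, Matrix.tail_cons,
            Matrix.cons_val_three, Matrix.cons_val_four] <;>
          field_simp <;> (first | ring1 | tauto | (left; ring1) | (right; ring1))
  -- branch 3 : dlt = 1, lam = 0
  · refine ⟨![0,0,1/2,0,0], ![0,1,-1,0,0], ?_, ?_⟩
    · intro h; have := congrFun h 1; norm_num at this
    · ext g
      simp only [Set.mem_setOf_eq, quantSystem]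
      constructor
      · rintro ⟨h1, h2', h3, h4', h5⟩
        have e4 : g 4 = 0 := by nlinarith
        have e0 : g 0 = 0 := cancel_fac hm2 (by nlinarith)
        have e3 : g 3 = 0 := cancel_fac hm2 (by nlinarith)
        have e2 : g 2 = 1/2 - g 1 := by nlinarith
        refine ⟨g 1, ?_⟩
        funext j; fin_cases j <;> simp <;> linarith
      · rintro ⟨t, rfl⟩
        refine ⟨?_,?_,?_,?_,?_⟩ <;> simp <;> ring_nf
  -- branch 4a : dlt = (n+1)/n, lam = 0
  · refine ⟨![-(1/(2*((n:ℝ)-1))), 0, 1, 0, 0], ![0,0,0,1,-(n:ℝ)], ?_, ?_⟩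
    · intro h; have := congrFun h 3; change (1:ℝ) = 0 at this; norm_num at this
    · ext g
      simp only [Set.mem_setOf_eq, quantSystem]
      constructor
      · rintro ⟨h1, h2', h3, h4', h5⟩
        field_simp at h1 h2' h3 h4' h5
        have e2 : g 2 = 1 := by linarith
        have e0 : 2*((n:ℝ)-1)*g 0 = -1 := by linear_combination -h1 - 2*e2 + 2*h4'
        have e4 : g 4 = -(n:ℝ)*g 3 := by linear_combination -h2'
        refine ⟨g 3, ?_⟩
        funext j; fin_cases j <;> simp <;> (try field_simp) <;> linarith
      · rintro ⟨t, rfl⟩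
        refine ⟨?_,?_,?_,?_,?_⟩ <;>
          simp only [Pi.add_apply, Pi.smul_apply, smul_eq_mul, Matrix.cons_val_zero,
            Matrix.cons_val_one, Matrix.head_cons, Matrix.cons_val_two, Matrix.tail_cons,
            Matrix.cons_val_three, Matrix.cons_val_four] <;>
          field_simp <;> (first | ring1 | tauto | (left; ring1) | (right; ring1))
  -- branch 4b : dlt = (n+1)/n, lam = -1/n
  · refine ⟨![1/(2*((n:ℝ)-1)), 1, -1, 0, 1/(2*((n:ℝ)-1))], ![0,0,0,1,-(n:ℝ)], ?_, ?_⟩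
    · intro h; have := congrFun h 3; change (1:ℝ) = 0 at this; norm_num at this
    · ext g
      simp only [Set.mem_setOf_eq, quantSystem]
      constructor
      · rintro ⟨h1, h2', h3, h4', h5⟩
        field_simp at h1 h2' h3 h4' h5
        have e2 : g 2 = -1 := by linarith
        have e0 : 2*((n:ℝ)-1)*g 0 = 1 := by linear_combination -h1 - 2*e2 + 2*h4'
        have e4 : g 4 = -(n:ℝ)*g 3 + g 0 := by linear_combination -h2'
        have e4b : 2*((n:ℝ)-1)*g 4 = 1 - 2*(n:ℝ)*((n:ℝ)-1)*g 3 := by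
          linear_combination (2*((n:ℝ)-1))*e4 + e0
        refine ⟨g 3, ?_⟩
        funext j; fin_cases j <;> simp <;> (try field_simp) <;> linarith
      · rintro ⟨t, rfl⟩
        refine ⟨?_,?_,?_,?_,?_⟩ <;>
          simp only [Pi.add_apply, Pi.smul_apply, smul_eq_mul, Matrix.cons_val_zero,
            Matrix.cons_val_one, Matrix.head_cons, Matrix.cons_val_two, Matrix.tail_cons,
            Matrix.cons_val_three, Matrix.cons_val_four] <;>
          field_simp <;> (first | ring1 | tauto | (left; ring1) | (right; ring1))
  -- branch 5 : dlt = (n+2)/n, lam = -1/n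
  · refine ⟨![0, 1/2, 0, -(1/(4*((n:ℝ)+2))), 1/4],
        ![-(1/(n:ℝ)), 0, 1, -(1/(2*(n:ℝ))), 1/2], ?_, ?_⟩
    · intro h; have := congrFun h 2; change (1:ℝ) = 0 at this; norm_num at this
    · ext g
      simp only [Set.mem_setOf_eq, quantSystem]
      constructor
      · rintro ⟨h1, h2', h3, h4', h5⟩
        field_simp at h1 h2' h3 h4' h5
        have e1 : 2 * g 1 = 1 := by linear_combination -h4'
        have e0 : 2*(n:ℝ)*g 0 = -2*g 2 := by linear_combination -h1 + h4'
        have e4 : 4*g 4 = 1 + 2*g 2 :=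
          cancel_fac hn0 (by linear_combination -2*(n:ℝ)*h3 - (n:ℝ)*h4')
        have e3 : 4*(n:ℝ)*((n:ℝ)+2)*g 3 = -(n:ℝ) - 2*(n:ℝ)*g 2 - 4*g 2 := by
          linear_combination (-4*(n:ℝ))*h2' + 2*e0 - (n:ℝ)*e4
        refine ⟨g 2, ?_⟩
        funext j; fin_cases j <;> simp <;> (try field_simp) <;> linarith
      · rintro ⟨t, rfl⟩
        refine ⟨?_,?_,?_,?_,?_⟩ <;>
          simp only [Pi.add_apply, Pi.smul_apply, smul_eq_mul, Matrix.cons_val_zero,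
            Matrix.cons_val_one, Matrix.head_cons, Matrix.cons_val_two, Matrix.tail_cons,
            Matrix.cons_val_three, Matrix.cons_val_four] <;>
          field_simp <;> (first | ring1 | tauto | (left; ring1) | (right; ring1))
end

section
/- Let n ≥ 3 and let g = diag(1,…,1,−1,…,−1) be the flat metric of signature (p,q), p+q=n. In the polynomial ring ℝ[ξ₁,…,ξₙ, y¹,…,yⁿ, p₁,…,pₙ], the six quadratic polynomials q₁ = g^{ij}ξ_iξ_j, q₂ = ξ_i y^i, q₃ = g_{ij}y^i y^j, q₄ = g^{ij}ξ_i p_j, q₅ = y^i p_i, q₆ = g^{ij}p_i p_j (summation over repeated indices) are algebraically independent over ℝ. -/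
open scoped BigOperators

noncomputable section
open MvPolynomial

/-- The polynomial ring `ℝ[ξ₁,…,ξₙ, y¹,…,yⁿ, p₁,…,pₙ]` in `3n` variables:
`Sum.inl i ↦ ξ_i`, `Sum.inr (Sum.inl i) ↦ y^i`, `Sum.inr (Sum.inr i) ↦ p_i`. -/
abbrev PolyRing3 (n : ℕ) := MvPolynomial (Fin n ⊕ (Fin n ⊕ Fin n)) ℝ

/-- The variable `ξ_i`. -/
def xiv {n : ℕ} (i : Fin n) : PolyRing3 n := X (Sum.inl i)

/-- The variable `y^i`. -/
def yv {n : ℕ} (i : Fin n) : PolyRing3 n := X (Sum.inr (Sum.inl i))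

/-- The variable `p_i`. -/
def pv {n : ℕ} (i : Fin n) : PolyRing3 n := X (Sum.inr (Sum.inr i))

/-- Entries of the flat metric `g = diag(1,…,1,−1,…,−1)` of signature `(p, n−p)`,
used to raise and lower indices (`g⁻¹ = g`). -/
def gmet (p : ℕ) {n : ℕ} (i j : Fin n) : ℝ :=
  if i = j then (if (i : ℕ) < p then 1 else -1) else 0

/-- The six quadratic `o(p,q)`-invariants. -/
def quadInv (p : ℕ) {n : ℕ} : Fin 6 → PolyRing3 n
  | 0 => ∑ i, ∑ j, C (gmet p i j) * xiv i * xiv j   -- g^{ij} ξ_i ξ_j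
  | 1 => ∑ i, xiv i * yv i                           -- ξ_i y^i
  | 2 => ∑ i, ∑ j, C (gmet p i j) * yv i * yv j      -- g_{ij} y^i y^j
  | 3 => ∑ i, ∑ j, C (gmet p i j) * xiv i * pv j     -- g^{ij} ξ_i p_j
  | 4 => ∑ i, yv i * pv i                            -- y^i p_i
  | 5 => ∑ i, ∑ j, C (gmet p i j) * pv i * pv j      -- g^{ij} p_i p_j

namespace QIAux

variable {K : Type} [Field K]

/-- A `ℕ`-indexed vector supported on indices `0,1,2`. -/
def wvec (x0 x1 x2 : K) : ℕ → K := fun k =>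
  if k = 0 then x0 else if k = 1 then x1 else if k = 2 then x2 else 0

/-- Sign twist: `1` on the positive part of the metric, `I` (a chosen `√−1`) elsewhere. -/
def sgn (p : ℕ) (I : K) : ℕ → K := fun k => if k < p then 1 else I

/-- The variable assignment used to specialize the `3n` variables. -/
def vmap (p : ℕ) (I a0 b0 b1 c0 c1 c2 : K) {n : ℕ} :
    (Fin n ⊕ (Fin n ⊕ Fin n)) → K :=
  Sum.elim (fun i => sgn p I i * wvec a0 0 0 i)
    (Sum.elim (fun i => sgn p (-I) i * wvec b0 b1 0 i)
      (fun i => sgn p I i * wvec c0 c1 c2 i))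

lemma wvec_hi (x0 x1 x2 : K) : ∀ k, 3 ≤ k → wvec x0 x1 x2 k = 0 := by
  intro k hk
  have h0 : k ≠ 0 := by omega
  have h1 : k ≠ 1 := by omega
  have h2 : k ≠ 2 := by omega
  simp [wvec, h0, h1, h2]

lemma sum3 {n : ℕ} (hn : 3 ≤ n) (w : ℕ → K) (hw : ∀ k, 3 ≤ k → w k = 0) :
    ∑ i : Fin n, w ↑i = w 0 + w 1 + w 2 := by
  rw [Fin.sum_univ_eq_sum_range]
  rw [← Finset.sum_subset (Finset.range_subset_range.mpr hn)
    (fun x _ hx => hw x (by simpa using hx))]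
  simp [Finset.sum_range_succ]

lemma metric_sum {n p : ℕ} (f : ℝ →+* K) (u w : Fin n → K) :
    ∑ i, ∑ j, f (gmet p i j) * u i * w j = ∑ i, f (gmet p i i) * u i * w i := by
  refine Finset.sum_congr rfl fun i _ => ?_
  refine Finset.sum_eq_single i (fun j _ hj => ?_)
    (fun h => absurd (Finset.mem_univ i) h)
  have hz : gmet p i j = 0 := by simp [gmet, Ne.symm hj]
  rw [hz, map_zero, zero_mul, zero_mul]

lemma sign_sq {n : ℕ} (p : ℕ) (i : Fin n) (f : ℝ →+* K) {I : K} (hI : I ^ 2 = -1)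
    (x y : K) :
    f (gmet p i i) * (sgn p I ↑i * x) * (sgn p I ↑i * y) = x * y := by
  have hg : gmet p i i = if (i : ℕ) < p then 1 else -1 := by simp [gmet]
  rw [hg]
  by_cases h : (i : ℕ) < p
  · simp [sgn, h]
  · simp only [sgn, if_neg h, map_neg, map_one]
    linear_combination (-(x * y)) * hI

lemma sign_cross₁ (p k : ℕ) {I : K} (hI : I ^ 2 = -1) (x y : K) :
    (sgn p I k * x) * (sgn p (-I) k * y) = x * y := by
  by_cases h : k < p
  · simp [sgn, h]
  · simp only [sgn, if_neg h]
    linear_combination (-(x * y)) * hI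

lemma sign_cross₂ (p k : ℕ) {I : K} (hI : I ^ 2 = -1) (x y : K) :
    (sgn p (-I) k * x) * (sgn p I k * y) = x * y := by
  by_cases h : k < p
  · simp [sgn, h]
  · simp only [sgn, if_neg h]
    linear_combination (-(x * y)) * hI

lemma eval_quadInv {n p : ℕ} (hn : 3 ≤ n) (f : ℝ →+* K)
    (I a0 b0 b1 c0 c1 c2 t0 t1 t2 t3 t4 t5 : K) (hI : I ^ 2 = -1)
    (h1 : a0 * a0 = t0) (h2 : a0 * b0 = t1) (h3 : b0 * b0 + b1 * b1 = t2)
    (h4 : a0 * c0 = t3) (h5 : b0 * c0 + b1 * c1 = t4)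
    (h6 : c0 * c0 + c1 * c1 + c2 * c2 = t5) :
    (eval₂Hom f (vmap p I a0 b0 b1 c0 c1 c2 (n := n)) (quadInv p 0) = t0) ∧
    (eval₂Hom f (vmap p I a0 b0 b1 c0 c1 c2 (n := n)) (quadInv p 1) = t1) ∧
    (eval₂Hom f (vmap p I a0 b0 b1 c0 c1 c2 (n := n)) (quadInv p 2) = t2) ∧
    (eval₂Hom f (vmap p I a0 b0 b1 c0 c1 c2 (n := n)) (quadInv p 3) = t3) ∧
    (eval₂Hom f (vmap p I a0 b0 b1 c0 c1 c2 (n := n)) (quadInv p 4) = t4) ∧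
    (eval₂Hom f (vmap p I a0 b0 b1 c0 c1 c2 (n := n)) (quadInv p 5) = t5) := by
  set E := eval₂Hom f (vmap p I a0 b0 b1 c0 c1 c2 (n := n)) with hE
  have hneg : (-I) ^ 2 = (-1 : K) := by rw [neg_sq]; exact hI
  refine ⟨?_, ?_, ?_, ?_, ?_, ?_⟩
  · -- q₁ : g^{ij} ξ_i ξ_j
    have s1 : E (quadInv p 0) =
        ∑ i : Fin n, ∑ j : Fin n,
          f (gmet p i j) * (sgn p I ↑i * wvec a0 0 0 ↑i)
            * (sgn p I ↑j * wvec a0 0 0 ↑j) := by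
      show E (∑ i, ∑ j, C (gmet p i j) * xiv i * xiv j) = _
      simp [hE, xiv, vmap, map_sum]
    have s2 : (∑ i : Fin n, ∑ j : Fin n,
          f (gmet p i j) * (sgn p I ↑i * wvec a0 0 0 ↑i)
            * (sgn p I ↑j * wvec a0 0 0 ↑j))
        = ∑ i : Fin n, f (gmet p i i) * (sgn p I ↑i * wvec a0 0 0 ↑i)
            * (sgn p I ↑i * wvec a0 0 0 ↑i) :=
      metric_sum f _ _
    have s3 : (∑ i : Fin n, f (gmet p i i) * (sgn p I ↑i * wvec a0 0 0 ↑i)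
            * (sgn p I ↑i * wvec a0 0 0 ↑i))
        = ∑ i : Fin n, (fun k => wvec a0 0 0 k * wvec a0 0 0 k) ↑i :=
      Finset.sum_congr rfl fun i _ => sign_sq p i f hI _ _
    have s4 := sum3 hn (fun k => wvec a0 0 0 k * wvec a0 0 0 k)
      (fun k hk => by simp [wvec_hi _ _ _ k hk])
    have s5 : wvec a0 (0:K) 0 0 * wvec a0 0 0 0 + wvec a0 0 0 1 * wvec a0 0 0 1
        + wvec a0 0 0 2 * wvec a0 0 0 2 = t0 := by
      simp [wvec]
      exact h1
    exact s1.trans (s2.trans (s3.trans (s4.trans s5)))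
  · -- q₂ : ξ_i y^i
    have s1 : E (quadInv p 1) =
        ∑ i : Fin n, (sgn p I ↑i * wvec a0 0 0 ↑i)
          * (sgn p (-I) ↑i * wvec b0 b1 0 ↑i) := by
      show E (∑ i, xiv i * yv i) = _
      simp [hE, xiv, yv, vmap, map_sum]
    have s3 : (∑ i : Fin n, (sgn p I ↑i * wvec a0 0 0 ↑i)
          * (sgn p (-I) ↑i * wvec b0 b1 0 ↑i))
        = ∑ i : Fin n, (fun k => wvec a0 0 0 k * wvec b0 b1 0 k) ↑i :=
      Finset.sum_congr rfl fun i _ => sign_cross₁ p ↑i hI _ _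
    have s4 := sum3 hn (fun k => wvec a0 0 0 k * wvec b0 b1 0 k)
      (fun k hk => by simp [wvec_hi _ _ _ k hk])
    have s5 : wvec a0 (0:K) 0 0 * wvec b0 b1 0 0 + wvec a0 0 0 1 * wvec b0 b1 0 1
        + wvec a0 0 0 2 * wvec b0 b1 0 2 = t1 := by
      simp [wvec]
      exact h2
    exact s1.trans (s3.trans (s4.trans s5))
  · -- q₃ : g_{ij} y^i y^j
    have s1 : E (quadInv p 2) =
        ∑ i : Fin n, ∑ j : Fin n,
          f (gmet p i j) * (sgn p (-I) ↑i * wvec b0 b1 0 ↑i)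
            * (sgn p (-I) ↑j * wvec b0 b1 0 ↑j) := by
      show E (∑ i, ∑ j, C (gmet p i j) * yv i * yv j) = _
      simp [hE, yv, vmap, map_sum]
    have s2 : (∑ i : Fin n, ∑ j : Fin n,
          f (gmet p i j) * (sgn p (-I) ↑i * wvec b0 b1 0 ↑i)
            * (sgn p (-I) ↑j * wvec b0 b1 0 ↑j))
        = ∑ i : Fin n, f (gmet p i i) * (sgn p (-I) ↑i * wvec b0 b1 0 ↑i)
            * (sgn p (-I) ↑i * wvec b0 b1 0 ↑i) :=
      metric_sum f _ _
    have s3 : (∑ i : Fin n, f (gmet p i i) * (sgn p (-I) ↑i * wvec b0 b1 0 ↑i)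
            * (sgn p (-I) ↑i * wvec b0 b1 0 ↑i))
        = ∑ i : Fin n, (fun k => wvec b0 b1 0 k * wvec b0 b1 0 k) ↑i :=
      Finset.sum_congr rfl fun i _ => sign_sq p i f hneg _ _
    have s4 := sum3 hn (fun k => wvec b0 b1 0 k * wvec b0 b1 0 k)
      (fun k hk => by simp [wvec_hi _ _ _ k hk])
    have s5 : wvec b0 b1 (0:K) 0 * wvec b0 b1 0 0 + wvec b0 b1 0 1 * wvec b0 b1 0 1
        + wvec b0 b1 0 2 * wvec b0 b1 0 2 = t2 := by
      simp [wvec]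
      exact h3
    exact s1.trans (s2.trans (s3.trans (s4.trans s5)))
  · -- q₄ : g^{ij} ξ_i p_j
    have s1 : E (quadInv p 3) =
        ∑ i : Fin n, ∑ j : Fin n,
          f (gmet p i j) * (sgn p I ↑i * wvec a0 0 0 ↑i)
            * (sgn p I ↑j * wvec c0 c1 c2 ↑j) := by
      show E (∑ i, ∑ j, C (gmet p i j) * xiv i * pv j) = _
      simp [hE, xiv, pv, vmap, map_sum]
    have s2 : (∑ i : Fin n, ∑ j : Fin n,
          f (gmet p i j) * (sgn p I ↑i * wvec a0 0 0 ↑i)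
            * (sgn p I ↑j * wvec c0 c1 c2 ↑j))
        = ∑ i : Fin n, f (gmet p i i) * (sgn p I ↑i * wvec a0 0 0 ↑i)
            * (sgn p I ↑i * wvec c0 c1 c2 ↑i) :=
      metric_sum f _ _
    have s3 : (∑ i : Fin n, f (gmet p i i) * (sgn p I ↑i * wvec a0 0 0 ↑i)
            * (sgn p I ↑i * wvec c0 c1 c2 ↑i))
        = ∑ i : Fin n, (fun k => wvec a0 0 0 k * wvec c0 c1 c2 k) ↑i :=
      Finset.sum_congr rfl fun i _ => sign_sq p i f hI _ _
    have s4 := sum3 hn (fun k => wvec a0 0 0 k * wvec c0 c1 c2 k)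
      (fun k hk => by simp [wvec_hi _ _ _ k hk])
    have s5 : wvec a0 (0:K) 0 0 * wvec c0 c1 c2 0 + wvec a0 0 0 1 * wvec c0 c1 c2 1
        + wvec a0 0 0 2 * wvec c0 c1 c2 2 = t3 := by
      simp [wvec]
      exact h4
    exact s1.trans (s2.trans (s3.trans (s4.trans s5)))
  · -- q₅ : y^i p_i
    have s1 : E (quadInv p 4) =
        ∑ i : Fin n, (sgn p (-I) ↑i * wvec b0 b1 0 ↑i)
          * (sgn p I ↑i * wvec c0 c1 c2 ↑i) := by
      show E (∑ i, yv i * pv i) = _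
      simp [hE, yv, pv, vmap, map_sum]
    have s3 : (∑ i : Fin n, (sgn p (-I) ↑i * wvec b0 b1 0 ↑i)
          * (sgn p I ↑i * wvec c0 c1 c2 ↑i))
        = ∑ i : Fin n, (fun k => wvec b0 b1 0 k * wvec c0 c1 c2 k) ↑i :=
      Finset.sum_congr rfl fun i _ => sign_cross₂ p ↑i hI _ _
    have s4 := sum3 hn (fun k => wvec b0 b1 0 k * wvec c0 c1 c2 k)
      (fun k hk => by simp [wvec_hi _ _ _ k hk])
    have s5 : wvec b0 b1 (0:K) 0 * wvec c0 c1 c2 0 + wvec b0 b1 0 1 * wvec c0 c1 c2 1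
        + wvec b0 b1 0 2 * wvec c0 c1 c2 2 = t4 := by
      simp [wvec]
      exact h5
    exact s1.trans (s3.trans (s4.trans s5))
  · -- q₆ : g^{ij} p_i p_j
    have s1 : E (quadInv p 5) =
        ∑ i : Fin n, ∑ j : Fin n,
          f (gmet p i j) * (sgn p I ↑i * wvec c0 c1 c2 ↑i)
            * (sgn p I ↑j * wvec c0 c1 c2 ↑j) := by
      show E (∑ i, ∑ j, C (gmet p i j) * pv i * pv j) = _
      simp [hE, pv, vmap, map_sum]
    have s2 : (∑ i : Fin n, ∑ j : Fin n,
          f (gmet p i j) * (sgn p I ↑i * wvec c0 c1 c2 ↑i)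
            * (sgn p I ↑j * wvec c0 c1 c2 ↑j))
        = ∑ i : Fin n, f (gmet p i i) * (sgn p I ↑i * wvec c0 c1 c2 ↑i)
            * (sgn p I ↑i * wvec c0 c1 c2 ↑i) :=
      metric_sum f _ _
    have s3 : (∑ i : Fin n, f (gmet p i i) * (sgn p I ↑i * wvec c0 c1 c2 ↑i)
            * (sgn p I ↑i * wvec c0 c1 c2 ↑i))
        = ∑ i : Fin n, (fun k => wvec c0 c1 c2 k * wvec c0 c1 c2 k) ↑i :=
      Finset.sum_congr rfl fun i _ => sign_sq p i f hI _ _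
    have s4 := sum3 hn (fun k => wvec c0 c1 c2 k * wvec c0 c1 c2 k)
      (fun k hk => by simp [wvec_hi _ _ _ k hk])
    have s5 : wvec c0 c1 c2 0 * wvec c0 c1 c2 0 + wvec c0 c1 c2 1 * wvec c0 c1 c2 1
        + wvec c0 c1 c2 2 * wvec c0 c1 c2 2 = t5 := by
      simp [wvec]
      exact h6
    exact s1.trans (s2.trans (s3.trans (s4.trans s5)))

end QIAux

open QIAux in
/-- for `n ≥ 3`, the six quadratic invariants
`q₁ = g^{ij}ξ_iξ_j, q₂ = ξ_i y^i, q₃ = g_{ij}y^iy^j, q₄ = g^{ij}ξ_ip_j,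
q₅ = y^ip_i, q₆ = g^{ij}p_ip_j` are algebraically independent over `ℝ`. -/
theorem quadratic_invariants_algebraically_independent
    (p q n : ℕ) (hpq : n = p + q) (hn : 3 ≤ n) :
    AlgebraicIndependent ℝ (quadInv p : Fin 6 → PolyRing3 n) := by
  classical
  rw [algebraicIndependent_iff_injective_aeval]
  set R6 := MvPolynomial (Fin 6) ℝ with hR6
  set K := AlgebraicClosure (FractionRing R6) with hK
  set ψ : R6 →+* K :=
    (algebraMap (FractionRing R6) K).comp (algebraMap R6 (FractionRing R6)) with hψdef
  have hψ : Function.Injective ψ := by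
    have i1 : Function.Injective (algebraMap R6 (FractionRing R6)) :=
      IsFractionRing.injective R6 (FractionRing R6)
    have i2 : Function.Injective (algebraMap (FractionRing R6) K) :=
      (algebraMap (FractionRing R6) K).injective
    intro a b hab
    exact i1 (i2 hab)
  set t : Fin 6 → K := fun i => ψ (X i) with ht
  obtain ⟨I, hI⟩ := IsAlgClosed.exists_pow_nat_eq (-1 : K) (n := 2) (by norm_num)
  obtain ⟨a0, ha0⟩ := IsAlgClosed.exists_pow_nat_eq (t 0) (n := 2) (by norm_num)
  have ht0 : t 0 ≠ 0 := by
    intro h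
    have hx : (X 0 : R6) ≠ 0 := X_ne_zero 0
    exact hx (hψ (by rw [map_zero]; exact h))
  have ha0ne : a0 ≠ 0 := by
    intro h
    apply ht0
    rw [← ha0, h]
    ring
  have hD : t 0 * t 2 - t 1 ^ 2 ≠ 0 := by
    intro h
    have hpoly : (X 0 * X 2 - X 1 ^ 2 : R6) ≠ 0 := by
      intro hh
      have h2 := congrArg (MvPolynomial.eval (fun i : Fin 6 => if i = 1 then 0 else 1)) hh
      simp at h2
    apply hpoly
    apply hψ
    rw [map_zero, map_sub, map_mul, map_pow]
    exact h
  set b0 : K := t 1 / a0 with hb0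
  obtain ⟨b1, hb1⟩ := IsAlgClosed.exists_pow_nat_eq (t 2 - b0 * b0) (n := 2) (by norm_num)
  have hb1ne : b1 ≠ 0 := by
    intro h
    apply hD
    have h2 : t 2 = b0 * b0 := by
      have := hb1
      rw [h] at this
      have h0 : (0 : K) = t 2 - b0 * b0 := by simpa using this
      linear_combination -h0
    rw [h2, hb0, ← ha0]
    have e : t 1 / a0 * (t 1 / a0) = t 1 ^ 2 / a0 ^ 2 := by rw [div_mul_div_comm, ← sq, ← sq]
    rw [e, mul_div_cancel₀ _ (pow_ne_zero 2 ha0ne), sub_self]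
  set c0 : K := t 3 / a0 with hc0
  set c1 : K := (t 4 - b0 * c0) / b1 with hc1
  obtain ⟨c2, hc2⟩ :=
    IsAlgClosed.exists_pow_nat_eq (t 5 - c0 * c0 - c1 * c1) (n := 2) (by norm_num)
  have h1 : a0 * a0 = t 0 := by rw [← ha0]; ring
  have h2 : a0 * b0 = t 1 := by rw [hb0, mul_div_cancel₀ _ ha0ne]
  have h3 : b0 * b0 + b1 * b1 = t 2 := by
    have : b1 * b1 = t 2 - b0 * b0 := by rw [← hb1]; ring
    linear_combination this
  have h4 : a0 * c0 = t 3 := by rw [hc0, mul_div_cancel₀ _ ha0ne]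
  have h5 : b0 * c0 + b1 * c1 = t 4 := by
    rw [hc1]
    rw [mul_div_cancel₀ _ hb1ne]; ring
  have h6 : c0 * c0 + c1 * c1 + c2 * c2 = t 5 := by
    have : c2 * c2 = t 5 - c0 * c0 - c1 * c1 := by rw [← hc2]; ring
    linear_combination this
  set f : ℝ →+* K := ψ.comp (C : ℝ →+* R6) with hf
  obtain ⟨e0, e1, e2, e3, e4, e5⟩ :=
    eval_quadInv (p := p) hn f I a0 b0 b1 c0 c1 c2 (t 0) (t 1) (t 2) (t 3) (t 4) (t 5)
      hI h1 h2 h3 h4 h5 h6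
  set E : PolyRing3 n →+* K := eval₂Hom f (vmap p I a0 b0 b1 c0 c1 c2 (n := n)) with hEdef
  have hcomp : E.comp (aeval (R := ℝ) (quadInv p : Fin 6 → PolyRing3 n)
      : MvPolynomial (Fin 6) ℝ →ₐ[ℝ] PolyRing3 n).toRingHom = ψ := by
    apply MvPolynomial.ringHom_ext
    · intro r
      have hQ : (aeval (R := ℝ) (quadInv p : Fin 6 → PolyRing3 n)).toRingHom (C r) = C r := by
        simp [MvPolynomial.algebraMap_eq]
      rw [RingHom.comp_apply, hQ, hEdef, eval₂Hom_C]
      rfl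
    · intro i
      have hQ : (aeval (R := ℝ) (quadInv p : Fin 6 → PolyRing3 n)).toRingHom (X i)
          = quadInv p i := by simp
      rw [RingHom.comp_apply, hQ]
      fin_cases i
      · exact e0
      · exact e1
      · exact e2
      · exact e3
      · exact e4
      · exact e5
  have hpt : ∀ z : MvPolynomial (Fin 6) ℝ,
      E (aeval (R := ℝ) (quadInv p : Fin 6 → PolyRing3 n) z) = ψ z := by
    intro z
    have := DFunLike.congr_fun hcomp z
    simpa using this
  intro x y hxy
  apply hψ
  rw [← hpt x, ← hpt y, hxy]
end
end
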